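/- arXiv:1506.05893 — 4 statements merged into one kernel-verified Lean document; each statement's English description precedes it below -/
import Mathlib

section
/- Let S be a finite set of s–t paths of G and let π be an s–t path of G with π ∉ S. Then there exists a weight function w : E → ℝ such that −1 ≤ len_w(x) ≤ 1 for every path x ∈ S, while len_w(π) = 1 + 1/|E| > 1. In particular, the maximum over weight functions w satisfying −1 ≤ len_w(x) ≤ 1 for all x ∈ S of the maximal value |len_w(τ)| over s–t paths τ is strictly greater than 1. -/
open Finset

/-- A walk in the digraph with edge set `E`: a list of edges, each in `E`,
consecutively chained (the head of each edge is the tail of the next). -/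
def IsWalk {V : Type*} (E : Finset (V × V)) (p : List (V × V)) : Prop :=
  (∀ e ∈ p, e ∈ E) ∧ p.Chain' (fun a b => a.2 = b.1)

/-- An s–t path: a nonempty walk starting at `s` and ending at `t`. -/
def IsSTPath {V : Type*} (E : Finset (V × V)) (s t : V) (p : List (V × V)) : Prop :=
  p ≠ [] ∧ IsWalk E p ∧ p.head?.map Prod.fst = some s ∧
    p.getLast?.map Prod.snd = some t

/-- The digraph with edge set `E` is acyclic: no nonempty walk returns to its
starting vertex. -/
def IsDAG {V : Type*} (E : Finset (V × V)) : Prop :=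
  ∀ p : List (V × V), p ≠ [] → IsWalk E p →
    p.head?.map Prod.fst ≠ p.getLast?.map Prod.snd

/-- The length of a path under the weight function `w`: the sum of the weights
of the edges in the path's edge set. -/
noncomputable def pathLen {V : Type*} [DecidableEq V] (w : V × V → ℝ)
    (p : List (V × V)) : ℝ :=
  ∑ e ∈ p.toFinset, w e

/-! In a DAG an s–t path is determined by its edges: if every edge of `π` lies on the
s–t path `x`, then `π = x`, since both must leave `s` by the same edge (no later edge of a
walk can return to `s`) and we may induct. So every `x ∈ S` misses an edge of `π`. Give each
of the `k` edges of `π` the weight `(1 + 1/|E|)/k` and every other edge weight `0`: then `π`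
has length `1 + 1/|E|`, while each `x ∈ S` has length at most
`(k - 1)(1 + 1/|E|)/k ≤ 1`, because `k ≤ |E|`. -/

section Paths

variable {V : Type*} {E : Finset (V × V)}

lemma IsWalk.fst_ne_of_mem_tail (hDAG : IsDAG E) {a : V × V} {p : List (V × V)}
    (hw : IsWalk E (a :: p)) {e : V × V} (he : e ∈ p) : e.1 ≠ a.1 := by
  intro h
  obtain ⟨u, v, rfl⟩ := List.append_of_mem he
  have hchain := hw.2
  rw [show a :: (u ++ e :: v) = (a :: u) ++ (e :: v) by simp, List.Chain',
    List.isChain_append] at hchain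
  obtain ⟨hprefix, -, hjoin⟩ := hchain
  have hlast : ((a :: u).getLast (by simp)).2 = e.1 :=
    hjoin _ (by simp [List.getLast?_eq_some_getLast (l := a :: u) (by simp)]) _ rfl
  refine hDAG (a :: u) (by simp)
    ⟨fun x hx => hw.1 x (List.cons_subset_cons _ (List.subset_append_left _ _) hx), hprefix⟩ ?_
  rw [List.getLast?_eq_some_getLast (l := a :: u) (by simp)]
  simp [hlast, h]

lemma IsSTPath.tail {s t : V} {a : V × V} {p : List (V × V)}
    (h : IsSTPath E s t (a :: p)) (hp : p ≠ []) : IsSTPath E a.2 t p := by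
  obtain ⟨b, p, rfl⟩ := List.exists_cons_of_ne_nil hp
  obtain ⟨-, ⟨hE, hchain⟩, -, hlast⟩ := h
  rw [List.Chain', List.isChain_cons_cons] at hchain
  refine ⟨by simp, ⟨fun e he => hE e (List.mem_cons_of_mem _ he), hchain.2⟩,
    by simp [hchain.1], ?_⟩
  rwa [List.getLast?_cons_cons] at hlast

lemma IsSTPath.eq_nil_of_snd_eq (hDAG : IsDAG E) {s t : V} {a : V × V} {p : List (V × V)}
    (h : IsSTPath E s t (a :: p)) (hat : a.2 = t) : p = [] := by
  by_contra hp
  have htail := h.tail hp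
  exact hDAG p hp htail.2.1 (by rw [htail.2.2.1, htail.2.2.2, hat])

lemma IsSTPath.eq_of_subset (hDAG : IsDAG E) {t : V} :
    ∀ {p q : List (V × V)} {s : V},
      IsSTPath E s t p → IsSTPath E s t q → p ⊆ q → p = q
  | [], _, _, hp, _, _ => absurd rfl hp.1
  | a :: p, q, s, hp, hq, hsub => by
    obtain ⟨b, q, rfl⟩ := List.exists_cons_of_ne_nil hq.1
    have hab : a = b := by
      have has : a.1 = s := by simpa using hp.2.2.1
      have hbs : b.1 = s := by simpa using hq.2.2.1
      rcases List.mem_cons.mp (hsub List.mem_cons_self) with h | h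
      · exact h
      · exact absurd (has.trans hbs.symm) (hq.2.1.fst_ne_of_mem_tail hDAG h)
    subst hab
    by_cases hat : a.2 = t
    · rw [hp.eq_nil_of_snd_eq hDAG hat, hq.eq_nil_of_snd_eq hDAG hat]
    have hp_ne : p ≠ [] := fun h => hat (by simpa [h] using hp.2.2.2)
    have hq_ne : q ≠ [] := fun h => hat (by simpa [h] using hq.2.2.2)
    have hsub' : p ⊆ q := fun e he =>
      (List.mem_cons.mp (hsub (List.mem_cons_of_mem _ he))).resolve_left
        fun hea => hp.2.1.fst_ne_of_mem_tail hDAG he (congrArg Prod.fst hea)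
    rw [IsSTPath.eq_of_subset hDAG (hp.tail hp_ne) (hq.tail hq_ne) hsub']

lemma IsSTPath.toFinset_subset [DecidableEq V] {s t : V} {p : List (V × V)}
    (hp : IsSTPath E s t p) : p.toFinset ⊆ E :=
  fun e he => hp.2.1.1 e (List.mem_toFinset.mp he)

lemma IsSTPath.toFinset_nonempty [DecidableEq V] {s t : V} {p : List (V × V)}
    (hp : IsSTPath E s t p) : p.toFinset.Nonempty :=
  List.toFinset_nonempty_iff p |>.mpr hp.1

lemma IsSTPath.card_inter_toFinset_lt [DecidableEq V] (hDAG : IsDAG E) {s t : V}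
    {x π : List (V × V)} (hx : IsSTPath E s t x) (hπ : IsSTPath E s t π) (hxπ : x ≠ π) :
    #(x.toFinset ∩ π.toFinset) < #π.toFinset := by
  refine card_lt_card ⟨inter_subset_right, fun hsub => hxπ ?_⟩
  refine (hπ.eq_of_subset hDAG hx fun e he => ?_).symm
  simpa using inter_subset_left (hsub (List.mem_toFinset.mpr he))

end Paths

lemma pathLen_ite_mem {V : Type*} [DecidableEq V] (F : Finset (V × V)) (a : ℝ)
    (x : List (V × V)) :
    pathLen (fun e => if e ∈ F then a else 0) x = #(x.toFinset ∩ F) * a := by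
  rw [pathLen, Finset.sum_ite_mem, Finset.sum_const, nsmul_eq_mul]

lemma natCast_mul_div_le_one {c k m : ℕ} (hck : c < k) (hkm : k ≤ m) :
    (c : ℝ) * ((1 + 1 / m) / k) ≤ 1 := by
  have hk : (0 : ℝ) < k := by exact_mod_cast (c.zero_le.trans_lt hck)
  have hm : (0 : ℝ) < m := hk.trans_le (by exact_mod_cast hkm)
  have hcm : (c : ℝ) / m ≤ 1 := (div_le_one hm).mpr (by exact_mod_cast (hck.trans_le hkm).le)
  have hck' : (c : ℝ) + 1 ≤ k := by exact_mod_cast hck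
  rw [mul_div_assoc', div_le_one hk, mul_add, mul_one_div]
  linarith

theorem stmt3_general {V : Type*} [DecidableEq V]
    (E : Finset (V × V)) (s t : V) (hDAG : IsDAG E)
    (S : Finset (List (V × V))) (hS : ∀ x ∈ S, IsSTPath E s t x)
    (π : List (V × V)) (hπ : IsSTPath E s t π) (hπS : π ∉ S) :
    (∃ w : V × V → ℝ,
      (∀ x ∈ S, -1 ≤ pathLen w x ∧ pathLen w x ≤ 1) ∧
      pathLen w π = 1 + 1 / (E.card : ℝ) ∧ 1 < pathLen w π) ∧
    (∃ (w : V × V → ℝ) (τ : List (V × V)),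
      (∀ x ∈ S, -1 ≤ pathLen w x ∧ pathLen w x ≤ 1) ∧
      IsSTPath E s t τ ∧ 1 < |pathLen w τ|) := by
  set k := #π.toFinset
  have hk : 0 < k := hπ.toFinset_nonempty.card_pos
  have hkE : k ≤ #E := card_le_card hπ.toFinset_subset
  set w : V × V → ℝ := fun e => if e ∈ π.toFinset then (1 + 1 / #E) / k else 0
  have hlenπ : pathLen w π = 1 + 1 / #E := by
    rw [pathLen_ite_mem, inter_self, mul_div_cancel₀ _ (by positivity)]
  have hbig : 1 < pathLen w π := by
    rw [hlenπ]
    exact lt_add_of_pos_right 1 (by have := hk.trans_le hkE; positivity)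
  have hbound : ∀ x ∈ S, -1 ≤ pathLen w x ∧ pathLen w x ≤ 1 := by
    intro x hx
    have hmiss := (hS x hx).card_inter_toFinset_lt hDAG hπ (ne_of_mem_of_not_mem hx hπS)
    rw [pathLen_ite_mem]
    exact ⟨(neg_nonpos.mpr zero_le_one).trans (by positivity), natCast_mul_div_le_one hmiss hkE⟩
  exact ⟨⟨w, hbound, hlenπ, hbig⟩, w, π, hbound, hπ, by rwa [abs_of_pos (one_pos.trans hbig)]⟩

/-- Theorem 2 of the paper: if S is a finite set of s-t paths and
the s-t path pi is not in S, then some weight function gives every path of S a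
length in [-1, 1] while pi gets length 1 + 1/|E| > 1.  In particular the optimal
value of Problem 4 is strictly greater than 1. -/
theorem stmt3 {V : Type*} [Fintype V] [DecidableEq V]
    (E : Finset (V × V)) (s t : V) (hDAG : IsDAG E)
    (S : Finset (List (V × V))) (hS : ∀ x ∈ S, IsSTPath E s t x)
    (π : List (V × V)) (hπ : IsSTPath E s t π) (hπS : π ∉ S) :
    (∃ w : V × V → ℝ,
      (∀ x ∈ S, -1 ≤ pathLen w x ∧ pathLen w x ≤ 1) ∧
      pathLen w π = 1 + 1 / (E.card : ℝ) ∧ 1 < pathLen w π) ∧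
    (∃ (w : V × V → ℝ) (τ : List (V × V)),
      (∀ x ∈ S, -1 ≤ pathLen w x ∧ pathLen w x ≤ 1) ∧
      IsSTPath E s t τ ∧ 1 < |pathLen w τ|) :=
  stmt3_general E s t hDAG S hS π hπ hπS
end

section
/- Let π be an s–t path of G, let e_1 be the first edge of π (the edge of π leaving the source s), and let D_π be the set of edges of G whose initial vertex lies on π but which are not themselves edges of π. Define w : E → ℝ by w(e_1) = 1 + 1/|E|, w(e) = −1/|E| for e ∈ D_π, and w(e) = 0 for all other edges. Then len_w(π) = 1 + 1/|E|, and every s–t path τ with τ ≠ π satisfies −1 ≤ len_w(τ) ≤ 1. -/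
/-!
Only `e1` has positive weight and no edge of `π` lies in `Dπ`, so `π` has length `1 + 1/|E|`.
Any other s–t path `τ` must leave `π`, because in a DAG an s–t walk using only edges of `π`
is `π` itself; the first edge by which `τ` leaves `π` lies in `Dπ`. Hence
`len τ ≤ (1 + 1/|E|) - 1/|E| = 1`, while `len τ ≥ -|τ|/|E| ≥ -1`.
-/

open Finset

lemma sum_eq_ite_sub_card_mul {α : Type*} [DecidableEq α] {w : α → ℝ} {a : α} {D : Finset α}
    {x c : ℝ} (haD : a ∉ D) (hwa : w a = x) (hwD : ∀ e ∈ D, w e = -c)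
    (hw0 : ∀ e, e ≠ a → e ∉ D → w e = 0) (S : Finset α) :
    ∑ e ∈ S, w e = (if a ∈ S then x else 0) - #(S ∩ D) * c := by
  have hw : ∀ e, w e = (if e = a then x else 0) - (if e ∈ D then c else 0) := by
    intro e
    by_cases hea : e = a
    · subst hea
      simp [hwa, haD]
    by_cases heD : e ∈ D
    · simp [hwD e heD, hea, heD]
    · simp [hw0 e hea heD, hea, heD]
  simp only [hw, sum_sub_distrib, sum_ite_eq', sum_ite_mem, sum_const, nsmul_eq_mul]

section Walk

variable {V : Type*} {E : Finset (V × V)}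

lemma IsWalk.of_append_left {p q : List (V × V)} (h : IsWalk E (p ++ q)) : IsWalk E p :=
  ⟨fun e he => h.1 e (List.mem_append_left _ he), h.2.prefix (List.prefix_append _ _)⟩

lemma isWalk_cons_cons {a b : V × V} {l : List (V × V)} :
    IsWalk E (a :: b :: l) ↔ a ∈ E ∧ a.2 = b.1 ∧ IsWalk E (b :: l) := by
  refine ⟨fun ⟨hE, hc⟩ => ?_, fun ⟨ha, hab, hE, hc⟩ => ?_⟩
  · obtain ⟨hab, hc⟩ := List.isChain_cons_cons.mp hc
    exact ⟨hE a List.mem_cons_self, hab, fun e he => hE e (List.mem_cons_of_mem _ he), hc⟩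
  · refine ⟨fun e he => ?_, List.isChain_cons_cons.mpr ⟨hab, hc⟩⟩
    rcases List.mem_cons.mp he with rfl | he
    exacts [ha, hE e he]

lemma IsDAG.fst_ne_of_mem_tail (hE : IsDAG E) {a b : V × V} {l : List (V × V)}
    (h : IsWalk E (a :: l)) (hb : b ∈ l) : a.1 ≠ b.1 := by
  obtain ⟨l₁, l₂, rfl⟩ := List.append_of_mem hb
  have hwalk : IsWalk E ((a :: l₁) ++ b :: l₂) := h
  have hlast : ((a :: l₁).getLast (List.cons_ne_nil _ _)).2 = b.1 :=
    (List.isChain_append.mp hwalk.2).2.2 _ (List.getLast?_eq_some_getLast _) b rfl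
  intro hab
  apply hE (a :: l₁) (List.cons_ne_nil _ _) hwalk.of_append_left
  simp [List.getLast?_eq_some_getLast, hlast, hab]

lemma IsDAG.getLast_snd_ne (hE : IsDAG E) {a b : V × V} {l : List (V × V)}
    (h : IsWalk E (a :: b :: l)) : (a :: b :: l).getLast?.map Prod.snd ≠ some a.2 := by
  obtain ⟨-, hab, hwalk⟩ := isWalk_cons_cons.mp h
  simpa [hab, eq_comm] using hE (b :: l) (List.cons_ne_nil _ _) hwalk

/- In a DAG the tail of an edge fixes its place in a walk, so the two walks agree edge by edge,
and neither can run past the other's end without closing a cycle. -/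
lemma IsDAG.eq_of_subset (hE : IsDAG E) {p q : List (V × V)} (hp₀ : p ≠ []) (hq₀ : q ≠ [])
    (hp : IsWalk E p) (hq : IsWalk E q) (hpq : p ⊆ q)
    (hhead : p.head?.map Prod.fst = q.head?.map Prod.fst)
    (hlast : p.getLast?.map Prod.snd = q.getLast?.map Prod.snd) : p = q := by
  induction p generalizing q with
  | nil => exact absurd rfl hp₀
  | cons e p ih =>
    obtain ⟨f, q, rfl⟩ := List.exists_cons_of_ne_nil hq₀
    obtain rfl : e = f := by
      rcases List.mem_cons.mp (hpq List.mem_cons_self) with h | h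
      · exact h
      · exact absurd (by simpa using hhead) (hE.fst_ne_of_mem_tail hq h).symm
    match p, q with
    | [], [] => rfl
    | [], b :: q => exact absurd hlast.symm (hE.getLast_snd_ne hq)
    | a :: p, [] => exact absurd hlast (hE.getLast_snd_ne hp)
    | a :: p, b :: q =>
      obtain ⟨-, hea, hp'⟩ := isWalk_cons_cons.mp hp
      obtain ⟨-, heb, hq'⟩ := isWalk_cons_cons.mp hq
      congr 1
      refine ih (List.cons_ne_nil _ _) (List.cons_ne_nil _ _) hp' hq' (fun x hx => ?_)
        (by simp [← hea, ← heb]) hlast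
      rcases List.mem_cons.mp (hpq (List.mem_cons_of_mem _ hx)) with rfl | h
      · exact absurd rfl (hE.fst_ne_of_mem_tail hp hx)
      · exact h

def OnWalk (p : List (V × V)) (v : V) : Prop :=
  ∃ e ∈ p, e.1 = v ∨ e.2 = v

lemma exists_exit_of_isChain {π τ : List (V × V)}
    (hτ : τ.IsChain (fun a b => a.2 = b.1)) (hstart : ∀ a ∈ τ.head?, OnWalk π a.1)
    (hleave : ¬ τ ⊆ π) : ∃ d ∈ τ, OnWalk π d.1 ∧ d ∉ π := by
  induction τ with
  | nil => exact absurd (List.nil_subset π) hleave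
  | cons a τ ih =>
    by_cases ha : a ∈ π
    · obtain ⟨d, hd, hdπ⟩ := ih hτ.tail (fun b hb => ⟨a, ha, Or.inr (hτ.rel_head? hb)⟩)
        (fun h => hleave (List.cons_subset.mpr ⟨ha, h⟩))
      exact ⟨d, List.mem_cons_of_mem _ hd, hdπ⟩
    · exact ⟨a, List.mem_cons_self, hstart a rfl, ha⟩

lemma IsDAG.exists_exit [DecidableEq V] (hE : IsDAG E) {s t : V}
    {π τ : List (V × V)} (hπ : IsSTPath E s t π) (hτ : IsSTPath E s t τ)
    (hne : τ.toFinset ≠ π.toFinset) : ∃ d ∈ τ, OnWalk π d.1 ∧ d ∉ π := by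
  obtain ⟨hπ₀, hπ, hπs, hπt⟩ := hπ
  obtain ⟨hτ₀, hτ, hτs, hτt⟩ := hτ
  refine exists_exit_of_isChain hτ.2 (fun a ha => ⟨π.head hπ₀, List.head_mem _, Or.inl ?_⟩)
    fun hsub => hne ?_
  · rw [List.head?_eq_some_head hπ₀] at hπs
    rw [ha] at hτs
    simpa using hπs.trans hτs.symm
  · rw [hE.eq_of_subset hτ₀ hπ₀ hτ hπ hsub (hτs.trans hπs.symm) (hτt.trans hπt.symm)]

end Walk

theorem stmt4_general {V : Type*} [DecidableEq V]
    (E : Finset (V × V)) (s t : V) (hDAG : IsDAG E)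
    (π : List (V × V)) (hπ : IsSTPath E s t π)
    (e1 : V × V) (he1 : π.head? = some e1)
    (Dπ : Finset (V × V))
    (hDπ : ∀ e, e ∈ Dπ ↔
      e ∈ E ∧ (∃ e' ∈ π, e'.1 = e.1 ∨ e'.2 = e.1) ∧ e ∉ π)
    (w : V × V → ℝ)
    (hw1 : w e1 = 1 + 1 / (E.card : ℝ))
    (hwD : ∀ e ∈ Dπ, w e = -(1 / (E.card : ℝ)))
    (hw0 : ∀ e, e ≠ e1 → e ∉ Dπ → w e = 0) :
    pathLen w π = 1 + 1 / (E.card : ℝ) ∧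
      ∀ τ : List (V × V), IsSTPath E s t τ → τ.toFinset ≠ π.toFinset →
        -1 ≤ pathLen w τ ∧ pathLen w τ ≤ 1 := by
  have he1π : e1 ∈ π := List.mem_of_mem_head? he1
  have he1D : e1 ∉ Dπ := fun h => ((hDπ e1).1 h).2.2 he1π
  have hlen (p : List (V × V)) := sum_eq_ite_sub_card_mul he1D hw1 hwD hw0 p.toFinset
  refine ⟨?_, fun τ hτ hne => ?_⟩
  · have hπD : π.toFinset ∩ Dπ = ∅ := eq_empty_of_forall_notMem fun e he =>
      ((hDπ e).1 (mem_inter.1 he).2).2.2 (List.mem_toFinset.1 (mem_inter.1 he).1)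
    simp [pathLen, hlen, he1π, hπD]
  obtain ⟨d, hdτ, hdD⟩ := hDAG.exists_exit hπ hτ hne
  have hpos : 0 < #(τ.toFinset ∩ Dπ) :=
    card_pos.mpr ⟨d, mem_inter.mpr ⟨List.mem_toFinset.mpr hdτ, (hDπ d).mpr ⟨hτ.2.1.1 d hdτ, hdD⟩⟩⟩
  have hle : #(τ.toFinset ∩ Dπ) ≤ #E := card_le_card fun e he => ((hDπ e).1 (mem_inter.1 he).2).1
  have hc : 0 ≤ 1 / (E.card : ℝ) := by positivity
  have hlower : (#(τ.toFinset ∩ Dπ) : ℝ) * (1 / #E) ≤ 1 := by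
    rw [mul_one_div]
    exact div_le_one_of_le₀ (by exact_mod_cast hle) (Nat.cast_nonneg _)
  have hupper : 1 / (#E : ℝ) ≤ #(τ.toFinset ∩ Dπ) * (1 / #E) :=
    le_mul_of_one_le_left hc (by exact_mod_cast hpos)
  rw [pathLen, hlen]
  constructor <;> split_ifs <;> linarith

/-- witness construction in the proof of Theorem 2: give the first
edge e1 of pi the weight 1 + 1/|E|, give every edge whose initial vertex lies on
pi but which is not an edge of pi the weight -1/|E|, and give every other edge
weight 0.  Then pi has length 1 + 1/|E| and every other s-t path has length in
[-1, 1]. -/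
theorem stmt4 {V : Type*} [Fintype V] [DecidableEq V]
    (E : Finset (V × V)) (s t : V) (hDAG : IsDAG E)
    (π : List (V × V)) (hπ : IsSTPath E s t π)
    (e1 : V × V) (he1 : π.head? = some e1)
    (Dπ : Finset (V × V))
    (hDπ : ∀ e, e ∈ Dπ ↔
      e ∈ E ∧ (∃ e' ∈ π, e'.1 = e.1 ∨ e'.2 = e.1) ∧ e ∉ π)
    (w : V × V → ℝ)
    (hw1 : w e1 = 1 + 1 / (E.card : ℝ))
    (hwD : ∀ e ∈ Dπ, w e = -(1 / (E.card : ℝ)))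
    (hw0 : ∀ e, e ≠ e1 → e ∉ Dπ → w e = 0) :
    pathLen w π = 1 + 1 / (E.card : ℝ) ∧
      ∀ τ : List (V × V), IsSTPath E s t τ → τ.toFinset ≠ π.toFinset →
        -1 ≤ pathLen w τ ∧ pathLen w τ ≤ 1 :=
  stmt4_general E s t hDAG π hπ e1 he1 Dπ hDπ w hw1 hwD hw0
end

section
/- Let M = {(x_1, l_1), …, (x_n, l_n)} be a finite set of measurements, let μ_max > 0, and let p, r : E → ℝ be weight functions such that |len_p(x_i) − l_i| ≤ μ_max and |len_r(x_i) − l_i| ≤ μ_max for every i. Suppose k ∈ ℝ is such that every weight function w' : E → ℝ with −1 ≤ len_{w'}(x_i) ≤ 1 for all i satisfies |len_{w'}(x)| ≤ k for every s–t path x of G. Then for every s–t path x of G, |len_p(x) − len_r(x)| ≤ 2 k μ_max. -/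
open Finset

/-- Theorem 3 of the paper: if both p and r are consistent with
every measurement up to mu_max > 0, and k bounds |len| of every s-t path for all
weight functions giving each measured path a length in [-1, 1], then the lengths
of any s-t path under p and under r differ by at most 2 k mu_max. -/
theorem stmt6 {V : Type*} [Fintype V] [DecidableEq V]
    (E : Finset (V × V)) (s t : V) (hDAG : IsDAG E)
    (n : ℕ)
    (x : Fin n → List (V × V)) (l : Fin n → ℝ)
    (hx : ∀ i, IsSTPath E s t (x i)) (hl : ∀ i, 0 ≤ l i)
    (μmax : ℝ) (hμ : 0 < μmax)
    (p r : V × V → ℝ)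
    (hp : ∀ i, |pathLen p (x i) - l i| ≤ μmax)
    (hr : ∀ i, |pathLen r (x i) - l i| ≤ μmax)
    (k : ℝ)
    (hk : ∀ w' : V × V → ℝ,
      (∀ i, -1 ≤ pathLen w' (x i) ∧ pathLen w' (x i) ≤ 1) →
      ∀ y : List (V × V), IsSTPath E s t y → |pathLen w' y| ≤ k) :
    ∀ y : List (V × V), IsSTPath E s t y →
      |pathLen p y - pathLen r y| ≤ 2 * k * μmax := by
  intro y hy
  set w' : V × V → ℝ := fun e => (p e - r e) / (2 * μmax) with hw'
  have hlen : ∀ z : List (V × V),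
      pathLen w' z = (pathLen p z - pathLen r z) / (2 * μmax) := by
    intro z
    simp only [pathLen, hw']
    rw [← Finset.sum_sub_distrib, Finset.sum_div]
  have hbound : ∀ i, -1 ≤ pathLen w' (x i) ∧ pathLen w' (x i) ≤ 1 := by
    intro i
    have h1 : |pathLen p (x i) - pathLen r (x i)| ≤ 2 * μmax := by
      have := abs_sub (pathLen p (x i) - l i) (pathLen r (x i) - l i)
      calc |pathLen p (x i) - pathLen r (x i)|
          = |(pathLen p (x i) - l i) - (pathLen r (x i) - l i)| := by ring_nf
        _ ≤ |pathLen p (x i) - l i| + |pathLen r (x i) - l i| := abs_sub _ _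
        _ ≤ μmax + μmax := add_le_add (hp i) (hr i)
        _ = 2 * μmax := by ring
    have h2 : |pathLen w' (x i)| ≤ 1 := by
      rw [hlen, abs_div, abs_of_pos (by linarith : (0:ℝ) < 2 * μmax)]
      rw [div_le_one (by linarith)]
      simpa using h1
    exact abs_le.mp h2
  have hk' := hk w' hbound y hy
  rw [hlen, abs_div, abs_of_pos (by linarith : (0:ℝ) < 2 * μmax),
    div_le_iff₀ (by linarith)] at hk'
  linarith
end

section
/- Suppose G has at least one s–t path and let S be a finite set of s–t paths of G. Then the following are equivalent: (a) there exist a weight function w : E → ℝ with −1 ≤ len_w(x) ≤ 1 for every x ∈ S and an s–t path π of G with |len_w(π)| > 1; (b) some s–t path of G does not belong to S. -/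
open Finset

/-!
If `π` is an s–t path outside `S`, put weight `2 / (2n - 1)` on each of the `n` edges of `π` and
`0` elsewhere. A path then has length proportional to the number of edges it shares with `π`.
In a DAG an s–t path whose edge set contains that of `π` is `π` itself, so every path of `S`
shares at most `n - 1` edges with `π` and has length in `[0, 1]`, while `π` has length
`2n / (2n - 1) > 1`.
-/

section

variable {V : Type*} {E : Finset (V × V)} {s t : V}

theorem IsWalk.infix {p q : List (V × V)} (h : IsWalk E p) (hq : q <:+: p) : IsWalk E q :=
  ⟨fun e he => h.1 e (hq.subset he), h.2.infix hq⟩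

theorem IsSTPath.fst_eq {e : V × V} {l : List (V × V)} (h : IsSTPath E s t (e :: l)) :
    e.1 = s := by
  simpa using h.2.2.1

theorem IsSTPath.snd_eq_of_singleton {e : V × V} (h : IsSTPath E s t [e]) : e.2 = t := by
  simpa using h.2.2.2

theorem IsSTPath.tail_s9 {e : V × V} {l : List (V × V)} (h : IsSTPath E s t (e :: l))
    (hl : l ≠ []) : IsSTPath E e.2 t l := by
  obtain ⟨a, l', rfl⟩ := List.exists_cons_of_ne_nil hl
  obtain ⟨-, hw, -, hlast⟩ := h
  have hea : e.2 = a.1 := hw.2.rel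
  refine ⟨by simp, hw.infix ((a :: l').suffix_cons e).isInfix, by simp [hea], ?_⟩
  rwa [List.getLast?_cons_cons] at hlast

namespace IsDAG

theorem ne_of_isSTPath (hDAG : IsDAG E) {p : List (V × V)} (hp : IsSTPath E s t p) : s ≠ t :=
  fun h => hDAG p hp.1 hp.2.1 (by rw [hp.2.2.1, hp.2.2.2, h])

theorem fst_ne_of_mem_tail_s9 (hDAG : IsDAG E) {e f : V × V} {l : List (V × V)}
    (h : IsWalk E (e :: l)) (hf : f ∈ l) : f.1 ≠ e.1 := by
  intro heq
  obtain ⟨b, c, rfl⟩ := List.append_of_mem hf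
  have hw : IsWalk E ((e :: b) ++ f :: c) := by simpa using h
  have hlast : ((e :: b).getLast (List.cons_ne_nil _ _)).2 = f.1 :=
    (List.isChain_append.mp hw.2).2.2 _ (List.getLast?_eq_some_getLast _) f rfl
  apply hDAG (e :: b) (List.cons_ne_nil _ _) (hw.infix ((e :: b).prefix_append _).isInfix)
  simp [List.getLast?_eq_some_getLast (List.cons_ne_nil e b), hlast, heq]

theorem nodup (hDAG : IsDAG E) {p : List (V × V)} (h : IsWalk E p) : p.Nodup := by
  induction p with
  | nil => exact List.nodup_nil
  | cons e l ih =>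
    exact List.nodup_cons.mpr ⟨fun he => hDAG.fst_ne_of_mem_tail_s9 h he rfl,
      ih (h.infix (l.suffix_cons e).isInfix)⟩

/-- Both paths begin with the same edge since, in a DAG, `x` leaves `s` only once. -/
theorem eq_of_subset_s9 (hDAG : IsDAG E) {x π : List (V × V)} (hx : IsSTPath E s t x)
    (hπ : IsSTPath E s t π) (hsub : π ⊆ x) : π = x := by
  induction x generalizing π s with
  | nil => exact absurd rfl hx.1
  | cons e x' ih =>
    obtain ⟨f, π', rfl⟩ := List.exists_cons_of_ne_nil hπ.1
    have hfe : f = e := by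
      rcases List.mem_cons.mp (hsub List.mem_cons_self) with h | h
      · exact h
      · exact absurd (hπ.fst_eq.trans hx.fst_eq.symm) (hDAG.fst_ne_of_mem_tail_s9 hx.2.1 h)
    subst hfe
    have hsub' : π' ⊆ x' := fun g hg =>
      (List.mem_cons.mp (hsub (List.mem_cons_of_mem f hg))).resolve_left
        (by rintro rfl; exact (List.nodup_cons.mp (hDAG.nodup hπ.2.1)).1 hg)
    rcases eq_or_ne π' [] with rfl | hπ'
    · rcases eq_or_ne x' [] with rfl | hx'
      · rfl
      · exact absurd hπ.snd_eq_of_singleton (hDAG.ne_of_isSTPath (hx.tail_s9 hx'))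
    · rcases eq_or_ne x' [] with rfl | hx'
      · exact absurd hx.snd_eq_of_singleton (hDAG.ne_of_isSTPath (hπ.tail_s9 hπ'))
      · rw [ih (hx.tail_s9 hx') (hπ.tail_s9 hπ') hsub']

theorem card_inter_lt [DecidableEq V] (hDAG : IsDAG E) {x π : List (V × V)}
    (hx : IsSTPath E s t x) (hπ : IsSTPath E s t π) (hne : π ≠ x) :
    #(x.toFinset ∩ π.toFinset) < #π.toFinset := by
  refine card_lt_card ⟨inter_subset_right, fun hsub => hne (hDAG.eq_of_subset_s9 hx hπ ?_)⟩
  intro e he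
  simpa using (mem_inter.mp (hsub (List.mem_toFinset.mpr he))).1

end IsDAG

theorem pathLen_indicator [DecidableEq V] (F : Finset (V × V)) (c : ℝ) (x : List (V × V)) :
    pathLen (fun e => if e ∈ F then c else 0) x = #(x.toFinset ∩ F) * c := by
  rw [pathLen, sum_ite_mem, sum_const, nsmul_eq_mul]

end

theorem stmt9_general {V : Type*} [DecidableEq V]
    (E : Finset (V × V)) (s t : V) (hDAG : IsDAG E)
    (S : Finset (List (V × V))) (hS : ∀ x ∈ S, IsSTPath E s t x) :
    (∃ (w : V × V → ℝ) (π : List (V × V)),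
      (∀ x ∈ S, -1 ≤ pathLen w x ∧ pathLen w x ≤ 1) ∧
      IsSTPath E s t π ∧ 1 < |pathLen w π|) ↔
    (∃ π : List (V × V), IsSTPath E s t π ∧ π ∉ S) := by
  constructor
  · rintro ⟨w, π, hbound, hπ, hlen⟩
    exact ⟨π, hπ, fun hmem => (abs_le.mpr (hbound π hmem)).not_gt hlen⟩
  · rintro ⟨π, hπ, hπS⟩
    set n : ℕ := #π.toFinset
    have hn : 1 ≤ n := card_pos.mpr (List.toFinset_nonempty_iff _ |>.mpr hπ.1)
    have hden : (0 : ℝ) < 2 * n - 1 := by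
      have : (1 : ℝ) ≤ n := by exact_mod_cast hn
      linarith
    refine ⟨fun e => if e ∈ π.toFinset then 2 / (2 * n - 1) else 0, π, ?_, hπ, ?_⟩
    · intro x hxS
      have hk : (#(x.toFinset ∩ π.toFinset) : ℝ) + 1 ≤ n := by
        exact_mod_cast hDAG.card_inter_lt (hS x hxS) hπ (fun h => hπS (h ▸ hxS))
      rw [pathLen_indicator, mul_div_assoc', le_div_iff₀ hden, div_le_one hden]
      constructor <;> linarith [(#(x.toFinset ∩ π.toFinset)).cast_nonneg (α := ℝ)]
    · rw [pathLen_indicator, inter_self, mul_div_assoc', abs_of_pos (by positivity),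
        lt_div_iff₀ hden]
      linarith

/-- the optimal value of Problem 4 exceeds 1 for a finite set S of
s-t paths if and only if some s-t path of G is missing from S. -/
theorem stmt9 {V : Type*} [Fintype V] [DecidableEq V]
    (E : Finset (V × V)) (s t : V) (hDAG : IsDAG E)
    (hpath : ∃ p, IsSTPath E s t p)
    (S : Finset (List (V × V))) (hS : ∀ x ∈ S, IsSTPath E s t x) :
    (∃ (w : V × V → ℝ) (π : List (V × V)),
      (∀ x ∈ S, -1 ≤ pathLen w x ∧ pathLen w x ≤ 1) ∧
      IsSTPath E s t π ∧ 1 < |pathLen w π|) ↔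
    (∃ π : List (V × V), IsSTPath E s t π ∧ π ∉ S) :=
  stmt9_general E s t hDAG S hS
end
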